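/- arXiv:0911.4008 — 4 statements merged into one kernel-verified Lean document; each statement's English description precedes it below -/
import Mathlib

section
/- Let $r$ be odd, let $n$ be even but not divisible by $4$, and let $V_1, \ldots, V_r$ be disjoint sets of size $n$. For each $i$ choose $A_i \subseteq V_i$ with $|A_i| = n/2$, and let $H$ be the $r$-partite $r$-graph whose edges are exactly those legal $r$-tuples containing an even number of vertices of $\bigcup_{i \le r} A_i$. Then every legal $(r-1)$-tuple has degree exactly $n/2$ in $H$, and $H$ has no perfect matching. -/
/-- The degree of the legal `(r-1)`-tuple obtained by restricting the full tuple `f`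
to the sides other than `V j`: the number of edges agreeing with `f` outside side `j`. -/
def degAvoiding {r : ℕ} {V : Fin r → Type*} [∀ i, DecidableEq (V i)]
    (E : Finset (∀ i, V i)) (j : Fin r) (f : ∀ i, V i) : ℕ :=
  (E.filter (fun e => ∀ i, i ≠ j → e i = f i)).card

/-- A perfect matching of an `r`-partite `r`-graph with edge set `E ⊆ V 0 × ⋯ × V (r-1)`:
a subset of `E` such that every vertex of every side lies in exactly one of its edges
(this forces the edges to be pairwise disjoint and to cover all vertices). -/
def IsPerfectMatchingR {r : ℕ} {V : Fin r → Type*}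
    (E M : Finset (∀ i, V i)) : Prop :=
  M ⊆ E ∧ ∀ (i : Fin r) (v : V i), ∃! e, e ∈ M ∧ e i = v

theorem stmt_4 (r n : ℕ) (hr : Odd r) (hn : Even n) (hn4 : ¬ (4 ∣ n))
    (V : Fin r → Type*) [∀ i, Fintype (V i)] [∀ i, DecidableEq (V i)]
    (hV : ∀ i, Fintype.card (V i) = n)
    (A : ∀ i, Finset (V i)) (hA : ∀ i, (A i).card = n / 2)
    -- the edges of H are exactly the legal r-tuples containing an even number
    -- of vertices of ⋃ A i
    (E : Finset (∀ i, V i))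
    (hE : ∀ e : ∀ i, V i,
      e ∈ E ↔ Even ((Finset.univ.filter (fun i : Fin r => e i ∈ A i)).card)) :
    (∀ (j : Fin r) (f : ∀ i, V i), degAvoiding E j f = n / 2) ∧
      ¬ ∃ M : Finset (∀ i, V i), IsPerfectMatchingR E M := by
  have count : ∀ (j : Fin r) (f e : ∀ i, V i), (∀ i, i ≠ j → e i = f i) →
      (Finset.univ.filter (fun i => e i ∈ A i)).card
        = (Finset.univ.filter (fun i => i ≠ j ∧ f i ∈ A i)).card
          + (if e j ∈ A j then 1 else 0) := by
    intro j f e he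
    rw [Finset.card_filter, Finset.card_filter,
      ← Finset.add_sum_erase _ _ (Finset.mem_univ j),
      ← Finset.add_sum_erase _ (fun i => if i ≠ j ∧ f i ∈ A i then 1 else 0)
        (Finset.mem_univ j)]
    have hsum : ∑ i ∈ Finset.univ.erase j, (if e i ∈ A i then 1 else 0)
        = ∑ i ∈ Finset.univ.erase j, (if i ≠ j ∧ f i ∈ A i then 1 else 0) := by
      apply Finset.sum_congr rfl
      intro i hi
      have hij : i ≠ j := Finset.ne_of_mem_erase hi
      rw [he i hij]
      simp [hij]
    simp [hsum]
    ring
  constructor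
  · intro j f
    set k := (Finset.univ.filter (fun i => i ≠ j ∧ f i ∈ A i)).card with hk
    set B : Finset (V j) := if Even k then (A j)ᶜ else A j with hBdef
    have hB : B.card = n / 2 := by
      rw [Nat.even_iff] at hn
      by_cases h : Even k <;>
        simp [hBdef, h, Finset.card_compl, hV, hA] <;> omega
    have hmem : ∀ v : V j, v ∈ B ↔ Even (k + if v ∈ A j then 1 else 0) := by
      intro v
      by_cases h : Even k <;> by_cases h2 : v ∈ A j <;>
        simp [hBdef, h, h2, Nat.even_add] <;> tauto
    have : degAvoiding E j f = B.card := by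
      apply Finset.card_bij (fun e _ => e j)
      · intro e he
        rw [Finset.mem_filter] at he
        rw [hmem, ← count j f e he.2]
        exact (hE e).mp he.1
      · intro e1 h1 e2 h2 h
        rw [Finset.mem_filter] at h1 h2
        funext i
        by_cases hij : i = j
        · subst hij; exact h
        · rw [h1.2 i hij, h2.2 i hij]
      · intro v hv
        refine ⟨Function.update f j v, ?_, Function.update_self _ _ _⟩
        rw [Finset.mem_filter]
        have hupd : ∀ i, i ≠ j → Function.update f j v i = f i := by
          intro i hij; exact Function.update_of_ne hij _ _
        constructor
        · rw [hE, count j f _ hupd, Function.update_self]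
          exact (hmem v).mp hv
        · exact hupd
    rw [this, hB]
  · rintro ⟨M, hME, huniq⟩
    have hcard : ∀ i : Fin r, (M.filter (fun e => e i ∈ A i)).card = (A i).card := by
      intro i
      apply Finset.card_bij (fun e _ => e i)
      · intro e he; exact (Finset.mem_filter.mp he).2
      · intro e1 h1 e2 h2 h
        obtain ⟨w, _, hwu⟩ := huniq i (e1 i)
        rw [hwu e1 ⟨(Finset.mem_filter.mp h1).1, rfl⟩,
          hwu e2 ⟨(Finset.mem_filter.mp h2).1, h.symm⟩]
      · intro v hv
        obtain ⟨e, ⟨heM, hei⟩, _⟩ := huniq i v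
        exact ⟨e, Finset.mem_filter.mpr ⟨heM, hei ▸ hv⟩, hei⟩
    have hEvenT : Even (∑ e ∈ M, (Finset.univ.filter (fun i => e i ∈ A i)).card) :=
      by
      apply Finset.even_sum
      exact fun e he => (hE e).mp (hME he)
    have hT : (∑ e ∈ M, (Finset.univ.filter (fun i => e i ∈ A i)).card)
        = r * (n / 2) := by
      have : ∀ e : ∀ i, V i, (Finset.univ.filter (fun i => e i ∈ A i)).card
          = ∑ i : Fin r, (if e i ∈ A i then 1 else 0) := fun e => Finset.card_filter _ _
      simp_rw [this]
      rw [Finset.sum_comm]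
      have : ∀ i : Fin r, (∑ e ∈ M, if e i ∈ A i then 1 else 0)
          = (A i).card := by
        intro i
        rw [← hcard i, Finset.card_filter]
      simp_rw [this, hA]
      simp [mul_comm]
    have h2 : Odd (n / 2) := by
      clear * - hn hn4
      rw [Nat.odd_iff]
      rw [Nat.even_iff] at hn
      omega
    have hOdd : Odd (r * (n / 2)) := hr.mul h2
    rw [hT] at hEvenT
    exact (Nat.not_odd_iff_even.mpr hEvenT) hOdd
end

section
/- Let $H$ be an $n$-balanced $r$-partite $r$-graph and let $I \subseteq [r]$. Suppose that for every legal $r$-tuple $z$ that is not an edge of $H$ one has $\frac{d(z \cap I)}{n^{r-|I|}} + \frac{d(z \cap I^c)}{n^{|I|}} \ge 1$, where $z \cap I$ denotes the restriction of $z$ to the sides indexed by $I$ and $I^c = [r] \setminus I$. Then $H$ has a perfect fractional matching. -/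
/-- The degree of the `I`-tuple obtained by restricting the full tuple `z` to the sides
indexed by `I`: the number of edges agreeing with `z` on all coordinates in `I`. -/
def degOn {r : ℕ} {V : Fin r → Type*} [∀ i, DecidableEq (V i)]
    (E : Finset (∀ i, V i)) (I : Finset (Fin r)) (z : ∀ i, V i) : ℕ :=
  (E.filter (fun e => ∀ i ∈ I, e i = z i)).card

/-- A perfect fractional matching of an `r`-partite `r`-graph with edge set `E`:
a nonnegative weighting of the edges such that the weights of the edges at each
vertex sum to exactly `1`. -/
def IsPerfectFractionalMatching {r : ℕ} {V : Fin r → Type*} [∀ i, DecidableEq (V i)]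
    (E : Finset (∀ i, V i)) (h : (∀ i, V i) → ℝ) : Prop :=
  (∀ e, 0 ≤ h e) ∧ (∀ e, e ∉ E → h e = 0) ∧
    ∀ (i : Fin r) (v : V i), ∑ e ∈ E.filter (fun e => e i = v), h e = 1

open Finset

/-!
Split every tuple into its `I`-part and its `Iᶜ`-part. This turns `H` into a bipartite graph
between `A = ∏_{i ∈ I} V i` and `B = ∏_{i ∉ I} V i` in which `a` and `b` have degrees `d(z ∩ I)`
and `d(z ∩ Iᶜ)` for `z = (a, b)`. The degree condition gives Hall's condition
`|B| |S| ≤ |A| |N(S)|`: for `a ∈ S` and `b ∉ N(S)` we have `d(a) ≤ |N(S)|` and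
`d(b) ≤ |A| - |S|`. After blowing up each vertex of `A` into `|B|` copies and each vertex of `B`
into `|A|` copies, Hall's theorem gives a perfect matching, that is, integer edge weights with
row sums `|B|` and column sums `|A|`. A vertex `v ∈ V i` with `i ∈ I` then receives total weight
`#{a | a i = v} * |B| = n ^ (r - 1)`, and symmetrically for `i ∉ I`, so dividing by `n ^ (r - 1)`
gives a perfect fractional matching.
-/

theorem mul_le_add_of_one_le_div_add_div {x y M N : ℝ} (hx : 0 ≤ x) (hy : 0 ≤ y)
    (hM : 0 ≤ M) (hN : 0 ≤ N) (h : 1 ≤ x / M + y / N) : M * N ≤ N * x + M * y := by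
  rcases hM.eq_or_lt with rfl | hM
  · simpa using mul_nonneg hN hx
  rcases hN.eq_or_lt with rfl | hN
  · simpa using mul_nonneg hM.le hy
  rw [div_add_div _ _ hM.ne' hN.ne', le_div_iff₀ (by positivity)] at h
  linarith

section Bipartite

variable {A B : Type*} [Fintype A] [Fintype B] [DecidableEq A] [DecidableEq B]
  (R : A → B → Prop) [DecidableRel R]

theorem hall_condition_of_nonadj
    (hdeg : ∀ a b, ¬R a b →
      Fintype.card B * Fintype.card A ≤
        Fintype.card A * #{b' | R a b'} + Fintype.card B * #{a' | R a' b})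
    (S : Finset A) :
    Fintype.card B * #S ≤ Fintype.card A * #(S.biUnion fun a => {b | R a b}) := by
  set T := S.biUnion fun a => ({b | R a b} : Finset B)
  by_contra! hlt
  obtain ⟨a, ha⟩ : S.Nonempty := nonempty_iff_ne_empty.2 fun h => by simp [h] at hlt
  obtain ⟨b, hb⟩ : ∃ b, b ∉ T := by
    by_contra! hT
    rw [eq_univ_of_forall hT, card_univ] at hlt
    nlinarith [card_le_univ S]
  have hab : ¬R a b := fun h => hb (mem_biUnion.2 ⟨a, ha, by simpa using h⟩)
  have hdeg_a : #{b' | R a b'} ≤ #T :=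
    card_le_card (subset_biUnion_of_mem (fun a => ({b | R a b} : Finset B)) ha)
  have hdeg_b : #{a' | R a' b} + #S ≤ Fintype.card A := by
    rw [← card_union_of_disjoint]
    · exact card_le_univ _
    · refine disjoint_left.2 fun a' ha' ha'S => hb (mem_biUnion.2 ⟨a', ha'S, ?_⟩)
      simpa using ha'
  nlinarith [hdeg a b hab]

theorem exists_biregular_weighting_of_hall
    (hall : ∀ S : Finset A,
      Fintype.card B * #S ≤ Fintype.card A * #(S.biUnion fun a => {b | R a b})) :
    ∃ g : A → B → ℕ, (∀ a b, ¬R a b → g a b = 0) ∧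
      (∀ a, ∑ b, g a b = Fintype.card B) ∧ (∀ b, ∑ a, g a b = Fintype.card A) := by
  set t : A × Fin (Fintype.card B) → Finset (B × Fin (Fintype.card A)) :=
    fun p => ({b | R p.1 b} : Finset B) ×ˢ univ
  have hall' : ∀ s, #s ≤ #(s.biUnion t) := by
    intro s
    have hs : s ⊆ s.image Prod.fst ×ˢ univ := fun p hp =>
      mem_product.2 ⟨mem_image_of_mem _ hp, mem_univ _⟩
    have ht : s.biUnion t =
        (s.image Prod.fst).biUnion (fun a => ({b | R a b} : Finset B)) ×ˢ univ := by
      ext; simp [t]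
    calc #s ≤ #(s.image Prod.fst) * Fintype.card B := by simpa using card_le_card hs
      _ ≤ _ := by
        rw [ht, card_product, card_univ, Fintype.card_fin]
        linarith [hall (s.image Prod.fst)]
  obtain ⟨f, hf_inj, hf_mem⟩ := (all_card_le_biUnion_card_iff_exists_injective t).1 hall'
  have hf_bij : Function.Bijective f := by
    rw [Fintype.bijective_iff_injective_and_card]
    exact ⟨hf_inj, by simp [mul_comm]⟩
  set e := Equiv.ofBijective f hf_bij
  refine ⟨fun a b => #{j | (e (a, j)).1 = b}, fun a b hab => ?_, fun a => ?_, fun b => ?_⟩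
  · rw [card_eq_zero, filter_eq_empty_iff]
    rintro j - rfl
    have := hf_mem (a, j)
    simp only [t, mem_product, mem_filter] at this
    exact hab this.1.2
  · simp only [card_eq_sum_ones, sum_filter]
    rw [sum_comm]; simp
  · simp only [card_eq_sum_ones, sum_filter]
    rw [← Fintype.sum_prod_type' (fun a j => if (e (a, j)).1 = b then 1 else 0),
      e.sum_comp (fun y => if y.1 = b then 1 else 0), Fintype.sum_prod_type]
    simp [apply_ite]

end Bipartite

section SplitEquiv

variable {X A B : Type*} (q : X ≃ A × B)

theorem card_filter_fst_eq [DecidableEq X] [DecidableEq A] [Fintype B]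
    (E : Finset X) (a : A) :
    #{x ∈ E | (q x).1 = a} = #{b | q.symm (a, b) ∈ E} := by
  refine card_nbij' (fun x => (q x).2) (fun b => q.symm (a, b)) ?_ ?_ ?_ ?_
  · intro x hx
    simp only [coe_filter] at hx
    simp [← hx.2, hx.1]
  · intro b hb
    simp_all
  · intro x hx
    simp only [coe_filter] at hx
    simp [← hx.2]
  · intro b _
    simp

theorem card_filter_snd_eq [DecidableEq X] [Fintype A] [DecidableEq B]
    (E : Finset X) (b : B) :
    #{x ∈ E | (q x).2 = b} = #{a | q.symm (a, b) ∈ E} :=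
  card_filter_fst_eq (q.trans (Equiv.prodComm A B)) E b

variable [Fintype X] [Fintype A] [Fintype B]

theorem sum_filter_fst_eq_card (g : A → B → ℕ) (hrow : ∀ a, ∑ b, g a b = Fintype.card B)
    (P : A → Prop) [DecidablePred P] :
    ∑ x with P (q x).1, g (q x).1 (q x).2 = #{x | P (q x).1} := by
  rw [card_eq_sum_ones, sum_filter, sum_filter,
    q.sum_comp (fun p => if P p.1 then g p.1 p.2 else 0),
    q.sum_comp (fun p => if P p.1 then 1 else 0), Fintype.sum_prod_type, Fintype.sum_prod_type]
  refine sum_congr rfl fun a _ => ?_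
  by_cases hP : P a <;> simp [hP, hrow]

theorem sum_filter_snd_eq_card (g : A → B → ℕ) (hcol : ∀ b, ∑ a, g a b = Fintype.card A)
    (P : B → Prop) [DecidablePred P] :
    ∑ x with P (q x).2, g (q x).1 (q x).2 = #{x | P (q x).2} :=
  sum_filter_fst_eq_card (q.trans (Equiv.prodComm A B)) (fun b a => g a b) hcol P

end SplitEquiv

theorem card_filter_apply_eq_pow {ι : Type*} [Fintype ι] [DecidableEq ι] {V : ι → Type*}
    [∀ i, Fintype (V i)] [∀ i, DecidableEq (V i)] {n : ℕ} (hV : ∀ i, Fintype.card (V i) = n)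
    (i : ι) (v : V i) : #{x : ∀ i, V i | x i = v} = n ^ (Fintype.card ι - 1) := by
  have := Fintype.card_filter_piFinset_eq_of_mem (fun i => (univ : Finset (V i))) i (mem_univ v)
  simpa [hV, card_erase_of_mem] using this

section Tuples

variable {r : ℕ} {V : Fin r → Type*} [∀ i, Fintype (V i)] [∀ i, DecidableEq (V i)]

theorem degOn_eq_card_fst (E : Finset (∀ i, V i)) (I : Finset (Fin r)) (z : ∀ i, V i) :
    degOn E I z = #{b | (Equiv.piEquivPiSubtypeProd (· ∈ I) V).symm
      ((Equiv.piEquivPiSubtypeProd (· ∈ I) V z).1, b) ∈ E} := by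
  rw [degOn, ← card_filter_fst_eq]
  congr 1
  refine filter_congr fun e _ => ?_
  simp [funext_iff]

theorem degOn_compl_eq_card_snd (E : Finset (∀ i, V i)) (I : Finset (Fin r)) (z : ∀ i, V i) :
    degOn E Iᶜ z = #{a | (Equiv.piEquivPiSubtypeProd (· ∈ I) V).symm
      (a, (Equiv.piEquivPiSubtypeProd (· ∈ I) V z).2) ∈ E} := by
  rw [degOn, ← card_filter_snd_eq]
  congr 1
  refine filter_congr fun e _ => ?_
  simp [funext_iff]

theorem isPerfectFractionalMatching_of_biregular {n : ℕ} (hV : ∀ i, Fintype.card (V i) = n)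
    (I : Finset (Fin r)) (E : Finset (∀ i, V i))
    (g : (∀ i : I, V i) → (∀ i : {i // i ∉ I}, V i) → ℕ)
    (hgE : ∀ a b, (Equiv.piEquivPiSubtypeProd (· ∈ I) V).symm (a, b) ∉ E → g a b = 0)
    (hrow : ∀ a, ∑ b, g a b = Fintype.card (∀ i : {i // i ∉ I}, V i))
    (hcol : ∀ b, ∑ a, g a b = Fintype.card (∀ i : I, V i)) :
    IsPerfectFractionalMatching E fun x =>
      (g (Equiv.piEquivPiSubtypeProd (· ∈ I) V x).1
        (Equiv.piEquivPiSubtypeProd (· ∈ I) V x).2 : ℝ) / (n : ℝ) ^ (r - 1) := by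
  set q := Equiv.piEquivPiSubtypeProd (· ∈ I) V
  have hg_of_notMem : ∀ x, x ∉ E → g (q x).1 (q x).2 = 0 := fun x hx =>
    hgE _ _ (by simpa using hx)
  refine ⟨fun x => by positivity, fun x hx => by simp [hg_of_notMem x hx], fun i v => ?_⟩
  have hn : 0 < n := hV i ▸ Fintype.card_pos_iff.2 ⟨v⟩
  have hsum : ∑ x with x i = v, g (q x).1 (q x).2 = n ^ (r - 1) := by
    have hcard := card_filter_apply_eq_pow hV i v
    rw [Fintype.card_fin] at hcard
    rw [← hcard]
    by_cases hi : i ∈ I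
    · exact sum_filter_fst_eq_card q g hrow (fun a => a ⟨i, hi⟩ = v)
    · exact sum_filter_snd_eq_card q g hcol (fun b => b ⟨i, hi⟩ = v)
  calc ∑ x ∈ E with x i = v, (g (q x).1 (q x).2 : ℝ) / (n : ℝ) ^ (r - 1)
      = ∑ x with x i = v, (g (q x).1 (q x).2 : ℝ) / (n : ℝ) ^ (r - 1) := by
        refine sum_subset (filter_subset_filter _ (subset_univ E)) fun x hx hxE => ?_
        have hx : x ∉ E := fun h => hxE (mem_filter.2 ⟨h, (mem_filter.1 hx).2⟩)
        simp [hg_of_notMem x hx]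
    _ = 1 := by
        rw [← sum_div, ← Nat.cast_sum, hsum, Nat.cast_pow]
        exact div_self (by positivity)

end Tuples

theorem stmt_7 (r n : ℕ) (V : Fin r → Type*)
    [∀ i, Fintype (V i)] [∀ i, DecidableEq (V i)]
    (hV : ∀ i, Fintype.card (V i) = n)
    (I : Finset (Fin r))
    (E : Finset (∀ i, V i))
    (hdeg : ∀ z : ∀ i, V i, z ∉ E →
      (degOn E I z : ℝ) / (n : ℝ) ^ (r - I.card)
        + (degOn E Iᶜ z : ℝ) / (n : ℝ) ^ I.card ≥ 1) :
    ∃ h : (∀ i, V i) → ℝ, IsPerfectFractionalMatching E h := by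
  set q := Equiv.piEquivPiSubtypeProd (· ∈ I) V
  have hcardA : Fintype.card (∀ i : {i // i ∈ I}, V i) = n ^ #I := by
    simp [Fintype.card_pi, hV]
  have hcardB : Fintype.card (∀ i : {i // i ∉ I}, V i) = n ^ (r - #I) := by
    simp [Fintype.card_pi, hV, Fintype.card_subtype_compl]
  have hall := hall_condition_of_nonadj (fun a b => q.symm (a, b) ∈ E) fun a b hab => by
    have h := hdeg (q.symm (a, b)) hab
    rw [degOn_eq_card_fst, degOn_compl_eq_card_snd, Equiv.apply_symm_apply] at h
    dsimp only at h
    rw [hcardA, hcardB]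
    exact_mod_cast mul_le_add_of_one_le_div_add_div (by positivity) (by positivity)
      (by positivity) (by positivity) h
  obtain ⟨g, hgE, hrow, hcol⟩ := exists_biregular_weighting_of_hall _ hall
  exact ⟨_, isPerfectFractionalMatching_of_biregular hV I E g hgE hrow hcol⟩
end

section
/- Let $H$ be an $n$-balanced $r$-partite $r$-graph and let $I \subseteq [r]$, $I^c = [r] \setminus I$. If $d(f) > \frac{n^{r-|I|}}{2}$ for every $I$-tuple $f$ and $d(g) \ge \frac{n^{|I|}}{2}$ for every $I^c$-tuple $g$, then $H$ has a perfect fractional matching. -/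
set_option linter.unusedSectionVars false
set_option maxHeartbeats 1000000

namespace Stmt8

/-- A Hall-type bijection for a "dense" bipartite relation, via blow-up and Hall's theorem. -/
theorem exists_bijection {α β : Type*} [Fintype α] [Fintype β] [DecidableEq α] [DecidableEq β]
    (N : α → Finset β) (M : β → Finset α)
    (hcompat : ∀ a b, b ∈ N a ↔ a ∈ M b)
    (hα : ∀ a, Fintype.card β < 2 * (N a).card)
    (hβ : ∀ b, Fintype.card α ≤ 2 * (M b).card) :
    ∃ φ : α × β → β × α, Function.Bijective φ ∧ ∀ p, (φ p).1 ∈ N p.1 := by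
  classical
  set t : α × β → Finset (β × α) := fun p => N p.1 ×ˢ Finset.univ with ht
  have htcard : ∀ p, (t p).card = (N p.1).card * Fintype.card α := by
    intro p
    rw [ht]
    rw [Finset.card_product, Finset.card_univ]
  have hall : ∀ s : Finset (α × β), s.card ≤ (s.biUnion t).card := by
    intro s
    rcases s.eq_empty_or_nonempty with rfl | ⟨⟨f, c⟩, hfc⟩
    · simp
    by_cases hcase : 2 * s.card ≤ Fintype.card α * Fintype.card β
    · have h1 : t (f, c) ⊆ s.biUnion t := Finset.subset_biUnion_of_mem t hfc
      have h4 := Finset.card_le_card h1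
      have h3 := hα f
      have key : 2 * s.card ≤ 2 * (s.biUnion t).card := by
        calc 2 * s.card ≤ Fintype.card α * Fintype.card β := hcase
          _ = Fintype.card β * Fintype.card α := Nat.mul_comm _ _
          _ ≤ (2 * (N f).card) * Fintype.card α :=
              Nat.mul_le_mul_right _ (le_of_lt h3)
          _ = 2 * ((N f).card * Fintype.card α) := by ring
          _ = 2 * (t (f, c)).card := by rw [htcard]
          _ ≤ 2 * (s.biUnion t).card := Nat.mul_le_mul_left _ h4
      omega
    · push_neg at hcase
      have huniv : s.biUnion t = Finset.univ := by
        apply Finset.eq_univ_iff_forall.mpr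
        rintro ⟨g, c'⟩
        have hAcard : (M g ×ˢ (Finset.univ : Finset β)).card = (M g).card * Fintype.card β := by
          rw [Finset.card_product, Finset.card_univ]
        have hAs : Fintype.card α * Fintype.card β ≤ 2 * (M g ×ˢ (Finset.univ : Finset β)).card := by
          rw [hAcard, ← Nat.mul_assoc]
          exact Nat.mul_le_mul_right _ (hβ g)
        have hint : (s ∩ (M g ×ˢ (Finset.univ : Finset β))).Nonempty := by
          rw [← Finset.card_pos]
          have h5 := Finset.card_union_add_card_inter s (M g ×ˢ (Finset.univ : Finset β))
          have h6 : (s ∪ M g ×ˢ (Finset.univ : Finset β)).card ≤ Fintype.card α * Fintype.card β := by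
            calc (s ∪ M g ×ˢ (Finset.univ : Finset β)).card
                ≤ (Finset.univ : Finset (α × β)).card := Finset.card_le_univ _
              _ = Fintype.card α * Fintype.card β := by
                  rw [Finset.card_univ, Fintype.card_prod]
          omega
        obtain ⟨⟨f', c₀⟩, hmem⟩ := hint
        have hs := (Finset.mem_inter.mp hmem).1
        have hA2 := (Finset.mem_inter.mp hmem).2
        have hfM : f' ∈ M g := (Finset.mem_product.mp hA2).1
        rw [Finset.mem_biUnion]
        refine ⟨(f', c₀), hs, ?_⟩
        rw [ht]
        exact Finset.mem_product.mpr ⟨(hcompat f' g).mpr hfM, Finset.mem_univ _⟩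
      rw [huniv, Finset.card_univ, Fintype.card_prod]
      have h7 : s.card ≤ Fintype.card α * Fintype.card β := by
        calc s.card ≤ (Finset.univ : Finset (α × β)).card := Finset.card_le_univ _
          _ = Fintype.card α * Fintype.card β := by rw [Finset.card_univ, Fintype.card_prod]
      rw [Nat.mul_comm]
      exact h7
  obtain ⟨φ, hφinj, hφmem⟩ := (Finset.all_card_le_biUnion_card_iff_exists_injective t).mp hall
  refine ⟨φ, ?_, ?_⟩
  · refine (Fintype.bijective_iff_injective_and_card φ).mpr ⟨hφinj, ?_⟩
    rw [Fintype.card_prod, Fintype.card_prod, Nat.mul_comm]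
  · intro p
    have := hφmem p
    rw [ht] at this
    exact (Finset.mem_product.mp this).1

variable {r : ℕ} {V : Fin r → Type*} [∀ i, Fintype (V i)] [∀ i, DecidableEq (V i)]

/-- tuples on the coordinates in `J` -/
abbrev Tup (V : Fin r → Type*) (J : Finset (Fin r)) : Type _ := ∀ j : {x : Fin r // x ∈ J}, V j.1

/-- restriction of a full tuple to coordinates in `J` -/
def Res (J : Finset (Fin r)) (z : ∀ i, V i) : Tup V J := fun j => z j.1

/-- combine an `I`-tuple and an `Iᶜ`-tuple into a full tuple -/
def combine (I : Finset (Fin r)) (f : Tup V I) (g : Tup V Iᶜ) : ∀ i, V i :=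
  fun i => if h : i ∈ I then f ⟨i, h⟩ else g ⟨i, Finset.mem_compl.mpr h⟩

theorem res1_combine (I : Finset (Fin r)) (f : Tup V I) (g : Tup V Iᶜ) :
    Res I (combine I f g) = f := by
  funext j
  simp [Res, combine, j.2]

theorem res2_combine (I : Finset (Fin r)) (f : Tup V I) (g : Tup V Iᶜ) :
    Res Iᶜ (combine I f g) = g := by
  funext j
  have hj : j.1 ∉ I := Finset.mem_compl.mp j.2
  simp [Res, combine, hj]

theorem combine_res (I : Finset (Fin r)) (z : ∀ i, V i) :
    combine I (Res I z) (Res Iᶜ z) = z := by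
  funext i
  by_cases h : i ∈ I <;> simp [Res, combine, h]

theorem combine_apply_mem (I : Finset (Fin r)) (f : Tup V I) (g : Tup V Iᶜ) {i : Fin r}
    (h : i ∈ I) : combine I f g i = f ⟨i, h⟩ := dif_pos h

theorem combine_apply_not_mem (I : Finset (Fin r)) (f : Tup V I) (g : Tup V Iᶜ) {i : Fin r}
    (h : i ∉ I) : combine I f g i = g ⟨i, Finset.mem_compl.mpr h⟩ := dif_neg h

theorem degOn_eq_card_filter (E : Finset (∀ i, V i)) (J : Finset (Fin r)) (z : ∀ i, V i) :
    degOn E J z = (E.filter fun e => Res J e = Res J z).card := by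
  unfold degOn
  congr 1
  apply Finset.filter_congr
  intro e _
  constructor
  · intro h
    funext j
    exact h j.1 j.2
  · intro h i hi
    exact congrFun h ⟨i, hi⟩

theorem card_tup (J : Finset (Fin r)) {n : ℕ} (hV : ∀ i, Fintype.card (V i) = n) :
    Fintype.card (Tup V J) = n ^ J.card := by
  rw [Fintype.card_pi]
  calc (∏ j : {x : Fin r // x ∈ J}, Fintype.card (V j.1))
      = ∏ _j : {x : Fin r // x ∈ J}, n := Finset.prod_congr rfl fun j _ => hV j.1
    _ = n ^ Fintype.card {x : Fin r // x ∈ J} := by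
        rw [Finset.prod_const, Finset.card_univ]
    _ = n ^ J.card := by rw [Fintype.card_coe]

theorem card_slice {n : ℕ} (hV : ∀ i, Fintype.card (V i) = n) (i : Fin r) (v : V i) :
    (Finset.univ.filter fun z : ∀ j, V j => z i = v).card * n = n ^ r := by
  classical
  have hbij : ((Finset.univ.filter fun z : ∀ j, V j => z i = v) ×ˢ (Finset.univ : Finset (V i))).card
      = (Finset.univ : Finset (∀ j, V j)).card := by
    apply Finset.card_bij (fun (p : (∀ j, V j) × V i) _ => Function.update p.1 i p.2)
    · intro a _
      exact Finset.mem_univ _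
    · intro a ha b hb hab
      have h2 : a.2 = b.2 := by
        have := congrFun hab i
        simpa [Function.update_self] using this
      have ha1 : a.1 i = v :=
        (Finset.mem_filter.mp (Finset.mem_product.mp ha).1).2
      have hb1 : b.1 i = v :=
        (Finset.mem_filter.mp (Finset.mem_product.mp hb).1).2
      have h1 : a.1 = b.1 := by
        funext j
        by_cases hj : j = i
        · subst hj
          rw [ha1, hb1]
        · have := congrFun hab j
          rwa [Function.update_of_ne hj, Function.update_of_ne hj] at this
      exact Prod.ext h1 h2
    · intro z _
      refine ⟨(Function.update z i v, z i), ?_, ?_⟩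
      · refine Finset.mem_product.mpr
          ⟨Finset.mem_filter.mpr ⟨Finset.mem_univ _, ?_⟩, Finset.mem_univ _⟩
        simp [Function.update_self]
      · rw [Function.update_idem, Function.update_eq_self]
  rw [Finset.card_product, Finset.card_univ, Finset.card_univ, hV i] at hbij
  rw [hbij, Fintype.card_pi]
  calc (∏ j : Fin r, Fintype.card (V j)) = ∏ _j : Fin r, n := Finset.prod_congr rfl fun j _ => hV j
    _ = n ^ r := by rw [Finset.prod_const, Finset.card_univ, Fintype.card_fin]

end Stmt8

open Stmt8 in
theorem stmt_8 (r n : ℕ) (V : Fin r → Type*)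
    [∀ i, Fintype (V i)] [∀ i, DecidableEq (V i)]
    (hV : ∀ i, Fintype.card (V i) = n)
    (I : Finset (Fin r))
    (E : Finset (∀ i, V i))
    -- every I-tuple has degree greater than n^(r-|I|)/2
    (hI : ∀ f : ∀ i, V i, (n : ℝ) ^ (r - I.card) / 2 < (degOn E I f : ℝ))
    -- every Iᶜ-tuple has degree at least n^|I|/2
    (hIc : ∀ g : ∀ i, V i, (n : ℝ) ^ I.card / 2 ≤ (degOn E Iᶜ g : ℝ)) :
    ∃ h : (∀ i, V i) → ℝ, IsPerfectFractionalMatching E h := by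
  classical
  rcases Nat.eq_zero_or_pos n with hn | hn
  · refine ⟨0, fun e => le_rfl, fun e _ => rfl, fun i v => ?_⟩
    have h0 : 0 < Fintype.card (V i) := Fintype.card_pos_iff.mpr ⟨v⟩
    rw [hV i] at h0
    omega
  haveI hne : ∀ i, Nonempty (V i) := fun i => Fintype.card_pos_iff.mp (by rw [hV i]; exact hn)
  have hT1 : Fintype.card (Tup V I) = n ^ I.card := card_tup I hV
  have hT2 : Fintype.card (Tup V Iᶜ) = n ^ (r - I.card) := by
    rw [card_tup Iᶜ hV, Finset.card_compl, Fintype.card_fin]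
  -- the two image-degree functions
  have himg1 : ∀ f : Tup V I,
      ((E.filter fun e => Res I e = f).image (Res Iᶜ)).card
        = (E.filter fun e => Res I e = f).card := by
    intro f
    apply Finset.card_image_of_injOn
    intro a ha b hb hab
    have ha' := (Finset.mem_filter.mp ha).2
    have hb' := (Finset.mem_filter.mp hb).2
    calc a = combine I (Res I a) (Res Iᶜ a) := (combine_res I a).symm
      _ = combine I (Res I b) (Res Iᶜ b) := by rw [ha', hb', hab]
      _ = b := combine_res I b
  have himg2 : ∀ g : Tup V Iᶜ,
      ((E.filter fun e => Res Iᶜ e = g).image (Res I)).card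
        = (E.filter fun e => Res Iᶜ e = g).card := by
    intro g
    apply Finset.card_image_of_injOn
    intro a ha b hb hab
    have ha' := (Finset.mem_filter.mp ha).2
    have hb' := (Finset.mem_filter.mp hb).2
    calc a = combine I (Res I a) (Res Iᶜ a) := (combine_res I a).symm
      _ = combine I (Res I b) (Res Iᶜ b) := by rw [ha', hb', hab]
      _ = b := combine_res I b
  -- degree bounds, in ℕ
  have hdI : ∀ f : Tup V I,
      Fintype.card (Tup V Iᶜ) < 2 * (E.filter fun e => Res I e = f).card := by
    intro f
    obtain ⟨g⟩ : Nonempty (Tup V Iᶜ) := inferInstance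
    have h1 := hI (combine I f g)
    rw [degOn_eq_card_filter, res1_combine] at h1
    have h2 : (n : ℝ) ^ (r - I.card) < 2 * ((E.filter fun e => Res I e = f).card : ℝ) := by
      linarith
    rw [hT2]
    exact_mod_cast h2
  have hdIc : ∀ g : Tup V Iᶜ,
      Fintype.card (Tup V I) ≤ 2 * (E.filter fun e => Res Iᶜ e = g).card := by
    intro g
    obtain ⟨f⟩ : Nonempty (Tup V I) := inferInstance
    have h1 := hIc (combine I f g)
    rw [degOn_eq_card_filter, res2_combine] at h1
    have h2 : (n : ℝ) ^ I.card ≤ 2 * ((E.filter fun e => Res Iᶜ e = g).card : ℝ) := by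
      linarith
    rw [hT1]
    exact_mod_cast h2
  -- Hall bijection
  obtain ⟨φ, hφbij, hφmem⟩ := exists_bijection
    (fun f : Tup V I => (E.filter fun e => Res I e = f).image (Res Iᶜ))
    (fun g : Tup V Iᶜ => (E.filter fun e => Res Iᶜ e = g).image (Res I))
    (by
      intro f g
      constructor
      · intro h
        obtain ⟨e, he, hre⟩ := Finset.mem_image.mp h
        exact Finset.mem_image.mpr ⟨e,
          Finset.mem_filter.mpr ⟨(Finset.mem_filter.mp he).1, hre⟩,
          (Finset.mem_filter.mp he).2⟩
      · intro h
        obtain ⟨e, he, hre⟩ := Finset.mem_image.mp h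
        exact Finset.mem_image.mpr ⟨e,
          Finset.mem_filter.mpr ⟨(Finset.mem_filter.mp he).1, hre⟩,
          (Finset.mem_filter.mp he).2⟩)
    (by intro f; rw [himg1 f]; exact hdI f)
    (by intro g; rw [himg2 g]; exact hdIc g)
  have hedge : ∀ (f : Tup V I) (c : Tup V Iᶜ),
      ∃ e ∈ E, Res I e = f ∧ Res Iᶜ e = (φ (f, c)).1 := by
    intro f c
    obtain ⟨e, he, hre⟩ := Finset.mem_image.mp (hφmem (f, c))
    exact ⟨e, (Finset.mem_filter.mp he).1, (Finset.mem_filter.mp he).2, hre⟩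
  -- the fractional matching
  set cnt : (∀ i, V i) → ℕ :=
    fun z => (Finset.univ.filter fun c : Tup V Iᶜ => (φ (Res I z, c)).1 = Res Iᶜ z).card
    with hcnt
  refine ⟨fun z => if z ∈ E then (cnt z : ℝ) / (n : ℝ) ^ (r - 1) else 0, ?_, ?_, ?_⟩
  · intro e
    dsimp only
    by_cases he : e ∈ E
    · rw [if_pos he]
      positivity
    · rw [if_neg he]
  · intro e he
    dsimp only
    rw [if_neg he]
  · intro i v
    dsimp only
    have hrpos : 0 < r := i.pos
    have hnr : ((n : ℝ)) ^ (r - 1) ≠ 0 := by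
      apply ne_of_gt
      apply pow_pos
      exact_mod_cast hn
    -- key counting identity
    have key : ∑ e ∈ E.filter (fun e => e i = v), cnt e = n ^ (r - 1) := by
      have hBsum :
          (((E.filter (fun e => e i = v)) ×ˢ (Finset.univ : Finset (Tup V Iᶜ))).filter
            (fun p => (φ (Res I p.1, p.2)).1 = Res Iᶜ p.1)).card
          = ∑ e ∈ E.filter (fun e => e i = v), cnt e := by
        rw [Finset.card_filter, Finset.sum_product]
        refine Finset.sum_congr rfl fun e _ => ?_
        rw [hcnt]
        dsimp only
        rw [Finset.card_filter]
      have hBslice :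
          (((E.filter (fun e => e i = v)) ×ˢ (Finset.univ : Finset (Tup V Iᶜ))).filter
            (fun p => (φ (Res I p.1, p.2)).1 = Res Iᶜ p.1)).card
          = (Finset.univ.filter fun z : ∀ j, V j => z i = v).card := by
        by_cases hiI : i ∈ I
        · apply Finset.card_bij (fun p _ => combine I (Res I p.1) p.2)
          · intro p hp
            obtain ⟨hp1, _⟩ := Finset.mem_filter.mp hp
            have hpA : p.1 ∈ E.filter (fun e => e i = v) := (Finset.mem_product.mp hp1).1
            refine Finset.mem_filter.mpr ⟨Finset.mem_univ _, ?_⟩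
            rw [combine_apply_mem I _ _ hiI]
            exact (Finset.mem_filter.mp hpA).2
          · intro p hp q hq hpq
            have h1 : Res I p.1 = Res I q.1 := by
              have := congrArg (Res I) hpq
              rwa [res1_combine, res1_combine] at this
            have h2 : p.2 = q.2 := by
              have := congrArg (Res Iᶜ) hpq
              rwa [res2_combine, res2_combine] at this
            have hp2 := (Finset.mem_filter.mp hp).2
            have hq2 := (Finset.mem_filter.mp hq).2
            have h3 : Res Iᶜ p.1 = Res Iᶜ q.1 := by
              rw [← hp2, ← hq2, h1, h2]
            have h4 : p.1 = q.1 := by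
              calc p.1 = combine I (Res I p.1) (Res Iᶜ p.1) := (combine_res I p.1).symm
                _ = combine I (Res I q.1) (Res Iᶜ q.1) := by rw [h1, h3]
                _ = q.1 := combine_res I q.1
            exact Prod.ext h4 h2
          · intro z hz
            have hzi : z i = v := (Finset.mem_filter.mp hz).2
            obtain ⟨e, heE, hre1, hre2⟩ := hedge (Res I z) (Res Iᶜ z)
            refine ⟨(e, Res Iᶜ z), ?_, ?_⟩
            · refine Finset.mem_filter.mpr
                ⟨Finset.mem_product.mpr ⟨?_, Finset.mem_univ _⟩, ?_⟩
              · refine Finset.mem_filter.mpr ⟨heE, ?_⟩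
                have h9 : Res I e ⟨i, hiI⟩ = Res I z ⟨i, hiI⟩ := by rw [hre1]
                exact h9.trans hzi
              · rw [hre1]
                exact hre2.symm
            · rw [hre1]
              exact combine_res I z
        · have hiIc : i ∈ Iᶜ := Finset.mem_compl.mpr hiI
          apply Finset.card_bij
            (fun p _ => combine I (φ (Res I p.1, p.2)).2 (φ (Res I p.1, p.2)).1)
          · intro p hp
            obtain ⟨hp1, hp2⟩ := Finset.mem_filter.mp hp
            have hpA : p.1 ∈ E.filter (fun e => e i = v) := (Finset.mem_product.mp hp1).1
            refine Finset.mem_filter.mpr ⟨Finset.mem_univ _, ?_⟩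
            rw [combine_apply_not_mem I _ _ hiI, hp2]
            exact (Finset.mem_filter.mp hpA).2
          · intro p hp q hq hpq
            have h1 : (φ (Res I p.1, p.2)).2 = (φ (Res I q.1, q.2)).2 := by
              have := congrArg (Res I) hpq
              rwa [res1_combine, res1_combine] at this
            have h2 : (φ (Res I p.1, p.2)).1 = (φ (Res I q.1, q.2)).1 := by
              have := congrArg (Res Iᶜ) hpq
              rwa [res2_combine, res2_combine] at this
            have h3 : φ (Res I p.1, p.2) = φ (Res I q.1, q.2) := Prod.ext h2 h1
            have h4 := hφbij.injective h3
            injection h4 with h5 h6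
            have hp2 := (Finset.mem_filter.mp hp).2
            have hq2 := (Finset.mem_filter.mp hq).2
            have h7 : Res Iᶜ p.1 = Res Iᶜ q.1 := by
              rw [← hp2, ← hq2, h3]
            have h8 : p.1 = q.1 := by
              calc p.1 = combine I (Res I p.1) (Res Iᶜ p.1) := (combine_res I p.1).symm
                _ = combine I (Res I q.1) (Res Iᶜ q.1) := by rw [h5, h7]
                _ = q.1 := combine_res I q.1
            exact Prod.ext h8 h6
          · intro z hz
            have hzi : z i = v := (Finset.mem_filter.mp hz).2
            obtain ⟨⟨f, c⟩, hfc⟩ := hφbij.surjective (Res Iᶜ z, Res I z)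
            obtain ⟨e, heE, hre1, hre2⟩ := hedge f c
            have hφe : φ (Res I e, c) = (Res Iᶜ z, Res I z) := by rw [hre1, hfc]
            refine ⟨(e, c), ?_, ?_⟩
            · refine Finset.mem_filter.mpr
                ⟨Finset.mem_product.mpr ⟨?_, Finset.mem_univ _⟩, ?_⟩
              · refine Finset.mem_filter.mpr ⟨heE, ?_⟩
                have h10 : Res Iᶜ e = Res Iᶜ z := by
                  rw [hre2, hfc]
                have h9 := congrFun h10 ⟨i, hiIc⟩
                exact h9.trans hzi
              · rw [hφe, hre2, hfc]
            · rw [hφe]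
              exact combine_res I z
      have hslice := card_slice hV i v
      rw [hBsum] at hBslice
      have hmul : (∑ e ∈ E.filter (fun e => e i = v), cnt e) * n = n ^ r := by
        rw [hBslice.symm] at hslice
        exact hslice
      have hrr : n ^ r = n ^ (r - 1) * n := by
        rw [← pow_succ, Nat.sub_add_cancel hrpos]
      rw [hrr] at hmul
      exact Nat.eq_of_mul_eq_mul_right hn hmul
    calc ∑ e ∈ E.filter (fun e => e i = v),
          (if e ∈ E then (cnt e : ℝ) / (n : ℝ) ^ (r - 1) else 0)
        = ∑ e ∈ E.filter (fun e => e i = v), (cnt e : ℝ) / (n : ℝ) ^ (r - 1) :=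
          Finset.sum_congr rfl fun e he => by
            rw [if_pos (Finset.mem_filter.mp he).1]
      _ = (∑ e ∈ E.filter (fun e => e i = v), (cnt e : ℝ)) / (n : ℝ) ^ (r - 1) := by
          rw [Finset.sum_div]
      _ = ((n : ℝ) ^ (r - 1)) / ((n : ℝ) ^ (r - 1)) := by
          rw [← Nat.cast_sum, key]
          push_cast
          ring_nf
      _ = 1 := div_self hnr
end

section
/- Let $H$ be a $3$-partite $3$-graph with sides $V_1, V_2, V_3$, where $|V_1| = n$ and $|V_2| \ge 2n - 1$. Suppose that every pair in $V_1 \times V_2$ has degree exactly $1$ in $H$ and every pair in $V_1 \times V_3$ has degree at most $1$ in $H$. Then $H$ has a matching of size $n$. -/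
/-!
Since every pair of `V1 × V2` lies in exactly one edge, each `u ∈ V1` determines a map
`g u : V2 → V3`, and the degree condition on `V1 × V3` makes `g u` injective. Choose the
edges greedily, one vertex `u` at a time: after `k` edges have been chosen, at most `k`
vertices of `V2` are used and, by injectivity of `g u`, at most `k` further ones are sent by
`g u` to a used vertex of `V3`. As long as `2k < |V2|` some `v ∈ V2` is still free, and
`(u, v, g u v)` extends the matching.
-/

open Finset Function

theorem exists_notMem_and_apply_notMem {β γ : Type*} [Fintype β] [DecidableEq β]
    {g : β → γ} (hg : Injective g) {B : Finset β} {C : Finset γ}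
    (h : #B + #C < Fintype.card β) : ∃ b, b ∉ B ∧ g b ∉ C := by
  have hpre : #(C.preimage g hg.injOn) ≤ #C :=
    card_le_card_of_injOn g (fun _ hb => mem_preimage.mp hb) hg.injOn
  have hlt : #(B ∪ C.preimage g hg.injOn) < #(univ : Finset β) :=
    (card_union_le _ _).trans_lt (by rw [card_univ]; omega)
  obtain ⟨b, -, hb⟩ := exists_mem_notMem_of_card_lt_card hlt
  rw [mem_union, mem_preimage, not_or] at hb
  exact ⟨b, hb⟩

section GreedyChoice

variable {α β γ : Type*} [Fintype β] [DecidableEq β] [DecidableEq γ] {f : α → β → γ}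

theorem exists_injOn_and_injOn_apply [Nonempty β] (hf : ∀ a, Injective (f a)) (S : Finset α)
    (hS : 2 * #S ≤ Fintype.card β + 1) :
    ∃ σ : α → β, Set.InjOn σ S ∧ Set.InjOn (fun a => f a (σ a)) S := by
  classical
  induction S using Finset.induction_on with
  | empty => exact ⟨fun _ => Classical.arbitrary β, by simp, by simp⟩
  | @insert a S ha ih =>
    rw [card_insert_of_notMem ha] at hS
    obtain ⟨σ, hσ, hfσ⟩ := ih (by omega)
    have hB := card_image_le (s := S) (f := σ)
    have hC := card_image_le (s := S) (f := fun a => f a (σ a))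
    obtain ⟨b, hbσ, hbf⟩ := exists_notMem_and_apply_notMem (hf a) (B := S.image σ)
      (C := S.image fun a => f a (σ a)) (by omega)
    have hagree : Set.EqOn (update σ a b) σ S := fun x hx =>
      update_of_ne (ne_of_mem_of_not_mem hx ha) _ _
    have hagree' : Set.EqOn (fun x => f x (update σ a b x)) (fun x => f x (σ x)) S :=
      fun x hx => congrArg (f x) (hagree hx)
    refine ⟨update σ a b, ?_, ?_⟩
    · rw [coe_insert, Set.injOn_insert (mem_coe.not.mpr ha), hagree.image_eq, update_self]
      exact ⟨hσ.congr hagree.symm, by simpa using hbσ⟩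
    · rw [coe_insert, Set.injOn_insert (mem_coe.not.mpr ha), hagree'.image_eq]
      refine ⟨hfσ.congr hagree'.symm, ?_⟩
      simpa using hbf

theorem exists_injective_and_injective_apply [Fintype α] (hf : ∀ a, Injective (f a))
    (h : 2 * Fintype.card α ≤ Fintype.card β + 1) :
    ∃ σ : α → β, Injective σ ∧ Injective (fun a => f a (σ a)) := by
  cases isEmpty_or_nonempty β
  · have : IsEmpty α := Fintype.card_eq_zero_iff.mp (by simp at h; omega)
    exact ⟨isEmptyElim, isEmptyElim, isEmptyElim⟩
  · obtain ⟨σ, hσ, hfσ⟩ := exists_injOn_and_injOn_apply hf univ (by rwa [card_univ])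
    rw [coe_univ, Set.injOn_univ] at hσ hfσ
    exact ⟨σ, hσ, hfσ⟩

end GreedyChoice

theorem stmt_12_general {V1 V2 V3 : Type*} [Fintype V1] [Fintype V2]
    [DecidableEq V1] [DecidableEq V2] [DecidableEq V3]
    (n : ℕ)
    (hV1 : Fintype.card V1 = n) (hV2 : 2 * n - 1 ≤ Fintype.card V2)
    (E : Finset (V1 × V2 × V3))
    -- every pair in V1 × V2 has degree exactly 1
    (h12 : ∀ u : V1, ∀ v : V2,
      (E.filter (fun e => e.1 = u ∧ e.2.1 = v)).card = 1)
    -- every pair in V1 × V3 has degree at most 1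
    (h13 : ∀ u : V1, ∀ w : V3,
      (E.filter (fun e => e.1 = u ∧ e.2.2 = w)).card ≤ 1) :
    -- H has a matching of size n
    ∃ M : Finset (V1 × V2 × V3), M ⊆ E ∧ M.card = n ∧
      ∀ e ∈ M, ∀ f ∈ M, e ≠ f →
        e.1 ≠ f.1 ∧ e.2.1 ≠ f.2.1 ∧ e.2.2 ≠ f.2.2 := by
  have hedge : ∀ u v, ∃ w, (u, v, w) ∈ E := fun u v => by
    obtain ⟨⟨u', v', w⟩, hmem⟩ := card_pos.mp ((h12 u v).symm ▸ Nat.one_pos)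
    obtain ⟨hE, rfl, rfl⟩ := mem_filter.mp hmem
    exact ⟨w, hE⟩
  choose g hg using hedge
  have hinj : ∀ u, Injective (g u) := fun u v v' hvv' =>
    congrArg (fun e => e.2.1) <| card_le_one.mp (h13 u (g u v))
      _ (mem_filter.mpr ⟨hg u v, rfl, rfl⟩) _ (mem_filter.mpr ⟨hg u v', rfl, hvv'.symm⟩)
  obtain ⟨σ, hσ, hgσ⟩ := exists_injective_and_injective_apply hinj (by omega)
  refine ⟨univ.image fun u => (u, σ u, g u (σ u)), ?_, ?_, ?_⟩
  · simpa [subset_iff] using fun u => hg u (σ u)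
  · rw [card_image_of_injective _ fun u u' h => congrArg Prod.fst h, card_univ, hV1]
  · simp only [mem_image, mem_univ, true_and]
    rintro _ ⟨u, rfl⟩ _ ⟨u', rfl⟩ hne
    have huu' : u ≠ u' := fun h => hne (h ▸ rfl)
    exact ⟨huu', hσ.ne huu', hgσ.ne huu'⟩

theorem stmt_12 {V1 V2 V3 : Type*} [Fintype V1] [Fintype V2] [Fintype V3]
    [DecidableEq V1] [DecidableEq V2] [DecidableEq V3]
    (n : ℕ)
    (hV1 : Fintype.card V1 = n) (hV2 : 2 * n - 1 ≤ Fintype.card V2)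
    (E : Finset (V1 × V2 × V3))
    -- every pair in V1 × V2 has degree exactly 1
    (h12 : ∀ u : V1, ∀ v : V2,
      (E.filter (fun e => e.1 = u ∧ e.2.1 = v)).card = 1)
    -- every pair in V1 × V3 has degree at most 1
    (h13 : ∀ u : V1, ∀ w : V3,
      (E.filter (fun e => e.1 = u ∧ e.2.2 = w)).card ≤ 1) :
    -- H has a matching of size n
    ∃ M : Finset (V1 × V2 × V3), M ⊆ E ∧ M.card = n ∧
      ∀ e ∈ M, ∀ f ∈ M, e ≠ f →
        e.1 ≠ f.1 ∧ e.2.1 ≠ f.2.1 ∧ e.2.2 ≠ f.2.2 :=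
  stmt_12_general n hV1 hV2 E h12 h13
end
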